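/- arXiv:1612.02788 — 4 statements merged into one kernel-verified Lean document; each statement's English description precedes it below -/
import Mathlib

section
/- There exist absolute constants C > 0 and c ∈ ℕ such that the following holds for all positive integers d ≤ n. Let A ⊆ {0,1}^n and B ⊆ {-1,0,1}^n be sets of vectors such that (i) every b ∈ B has exactly d nonzero entries, and (ii) for all a, a' ∈ A and b, b' ∈ B, if a + b = a' + b' (addition in ℤ^n) then a = a' and b = b'. Then |A| · |B| ≤ C · n^c · 2^n · binomial(n, ⌈d/2⌉). -/
/-!
Call a coordinate of `a + b` *extreme* if its value is `-1` or `2`; there `a i` and `b i` are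
both forced. An integer in `[-1, 2]` is determined by whether it is extreme and whether it is
`≥ 1`, so `a + b` (hence, by unique decodability, the pair `(a, b)`) is determined by its set of
`r` extreme coordinates together with `n` bits: at most `binomial(n, r) * 2^n` pairs have exactly
`r` extreme coordinates. Replacing `a` by `1 - a` keeps the code uniquely decodable and turns the
`r` extreme coordinates into the complementary `d - r` coordinates of `supp b`, so the same bound
holds with `binomial(n, d - r)`. Since `min(r, d - r) ≤ ⌈d/2⌉`, summing over `0 ≤ r ≤ d` gives
`|A| |B| ≤ (d + 1) 2^n binomial(n, ⌈d/2⌉)`.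
-/

open Finset

theorem Nat.choose_le_choose_of_le_of_add_le {n j k : ℕ} (hjk : j ≤ k) (h : j + k ≤ n) :
    n.choose j ≤ n.choose k := by
  have mono : ∀ {j k : ℕ}, j ≤ k → k ≤ n / 2 → n.choose j ≤ n.choose k := by
    intro j k hjk hk
    induction k, hjk using Nat.le_induction with
    | base => rfl
    | succ m _ ih => exact (ih (by omega)).trans (Nat.choose_le_succ_of_lt_half_left (by omega))
  rcases le_or_gt k (n / 2) with hk | hk
  · exact mono hjk hk
  · rw [← Nat.choose_symm (by omega : k ≤ n)]
    exact mono (by omega) (by omega)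

variable {ι : Type*}

def extremeCoords [Fintype ι] (v : ι → ℤ) : Finset ι := univ.filter fun i => v i = -1 ∨ v i = 2

theorem injOn_extremeCoords_prod_decide [Fintype ι] :
    Set.InjOn (fun v : ι → ℤ => (extremeCoords v, fun i => decide (1 ≤ v i)))
      {v | ∀ i, v i ∈ Set.Icc (-1) 2} := by
  intro v hv w hw h
  simp only [Prod.mk.injEq, extremeCoords, Finset.ext_iff, mem_filter, mem_univ, true_and,
    funext_iff, decide_eq_decide] at h
  funext i
  have := hv i; have := hw i; have := h.1 i; have := h.2 i
  simp only [Set.mem_Icc] at *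
  omega

theorem card_filter_card_extremeCoords_eq_le [Fintype ι] [DecidableEq ι] {α : Type*}
    {s : Finset α} {f : α → ι → ℤ}
    (hf : Set.InjOn f s) (hrange : ∀ x ∈ s, ∀ i, f x i ∈ Set.Icc (-1) 2) (r : ℕ) :
    #{x ∈ s | #(extremeCoords (f x)) = r} ≤ (Fintype.card ι).choose r * 2 ^ Fintype.card ι := by
  have hcard : #((univ : Finset ι).powersetCard r ×ˢ (univ : Finset (ι → Bool))) =
      (Fintype.card ι).choose r * 2 ^ Fintype.card ι := by
    simp [card_powersetCard]
  rw [← hcard]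
  refine card_le_card_of_injOn (fun x => (extremeCoords (f x), fun i => decide (1 ≤ f x i)))
    (fun x hx => ?_) ?_
  · simp only [coe_filter, Set.mem_ofPred_eq] at hx
    simp [mem_powersetCard, hx.2]
  · exact injOn_extremeCoords_prod_decide.comp (hf.mono fun x hx => (mem_filter.1 hx).1)
      fun x hx => hrange x (mem_filter.1 hx).1

theorem card_extremeCoords_add_add_card_extremeCoords_one_sub_add [Fintype ι] [DecidableEq ι]
    {a b : ι → ℤ} (ha : ∀ i, a i = 0 ∨ a i = 1) (hb : ∀ i, b i = -1 ∨ b i = 0 ∨ b i = 1) :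
    #(extremeCoords (a + b)) + #(extremeCoords (1 - a + b)) = #{i | b i ≠ 0} := by
  have hunion :
      ({i | b i ≠ 0} : Finset ι) = extremeCoords (a + b) ∪ extremeCoords (1 - a + b) := by
    ext i
    have := ha i; have := hb i
    simp only [extremeCoords, mem_filter, mem_union, mem_univ, true_and, Pi.add_apply,
      Pi.sub_apply, Pi.one_apply]
    omega
  rw [hunion, card_union_of_disjoint]
  refine disjoint_filter.2 fun i _ h₁ h₂ => ?_
  have := ha i; have := hb i
  simp only [Pi.add_apply, Pi.sub_apply, Pi.one_apply] at h₁ h₂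
  omega

theorem injOn_one_sub_add {A B : Finset (ι → ℤ)}
    (hinj : Set.InjOn (fun p : (ι → ℤ) × (ι → ℤ) => p.1 + p.2) ↑(A ×ˢ B)) :
    Set.InjOn (fun p : (ι → ℤ) × (ι → ℤ) => 1 - p.1 + p.2) ↑(A ×ˢ B) := by
  rintro ⟨a, b⟩ hab ⟨a', b'⟩ hab' h
  simp only [coe_product, Set.mem_prod, mem_coe] at hab hab' h
  have := @hinj (a', b) (by simp [hab.2, hab'.1]) (a, b') (by simp [hab.1, hab'.2])
    (by simp only; linear_combination h)
  simp only [Prod.mk.injEq] at this ⊢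
  exact ⟨this.1.symm, this.2⟩

theorem card_filter_card_extremeCoords_add_eq_le [Fintype ι] [DecidableEq ι]
    {A B : Finset (ι → ℤ)} {d : ℕ} (hA : ∀ a ∈ A, ∀ i, a i = 0 ∨ a i = 1)
    (hB : ∀ b ∈ B, ∀ i, b i = -1 ∨ b i = 0 ∨ b i = 1) (hBd : ∀ b ∈ B, #{i | b i ≠ 0} = d)
    (hdι : d ≤ Fintype.card ι)
    (hinj : Set.InjOn (fun p : (ι → ℤ) × (ι → ℤ) => p.1 + p.2) ↑(A ×ˢ B)) {r : ℕ} (hr : r ≤ d) :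
    #{p ∈ A ×ˢ B | #(extremeCoords (p.1 + p.2)) = r} ≤
      (Fintype.card ι).choose ((d + 1) / 2) * 2 ^ Fintype.card ι := by
  have hsplit : ∀ p ∈ A ×ˢ B,
      #(extremeCoords (p.1 + p.2)) + #(extremeCoords (1 - p.1 + p.2)) = d := fun p hp => by
    rw [mem_product] at hp
    rw [card_extremeCoords_add_add_card_extremeCoords_one_sub_add (hA _ hp.1) (hB _ hp.2),
      hBd _ hp.2]
  have hrange : ∀ p ∈ A ×ˢ B, ∀ i, (p.1 + p.2) i ∈ Set.Icc (-1) 2 ∧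
      (1 - p.1 + p.2) i ∈ Set.Icc (-1) 2 := fun p hp i => by
    rw [mem_product] at hp
    have := hA _ hp.1 i; have := hB _ hp.2 i
    simp only [Pi.add_apply, Pi.sub_apply, Pi.one_apply, Set.mem_Icc]
    omega
  rcases le_total r (d - r) with h | h
  · calc _ ≤ (Fintype.card ι).choose r * 2 ^ Fintype.card ι :=
          card_filter_card_extremeCoords_eq_le hinj (fun p hp i => (hrange p hp i).1) r
      _ ≤ _ := Nat.mul_le_mul_right _ (Nat.choose_le_choose_of_le_of_add_le (by omega) (by omega))
  · have hfiber : {p ∈ A ×ˢ B | #(extremeCoords (p.1 + p.2)) = r} =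
        {p ∈ A ×ˢ B | #(extremeCoords (1 - p.1 + p.2)) = d - r} :=
      filter_congr fun p hp => by have := hsplit p hp; omega
    calc _ = _ := congrArg card hfiber
      _ ≤ (Fintype.card ι).choose (d - r) * 2 ^ Fintype.card ι :=
          card_filter_card_extremeCoords_eq_le (injOn_one_sub_add hinj)
            (fun p hp i => (hrange p hp i).2) (d - r)
      _ ≤ _ := Nat.mul_le_mul_right _ (Nat.choose_le_choose_of_le_of_add_le (by omega) (by omega))

/-- UDCP-style bound with absolute constants. -/
theorem stmt0 :
    ∃ (C : ℝ) (c : ℕ), 0 < C ∧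
      ∀ (n d : ℕ), 0 < d → d ≤ n →
        ∀ (A B : Finset (Fin n → ℤ)),
          (∀ a ∈ A, ∀ i, a i = 0 ∨ a i = 1) →
          (∀ b ∈ B, ∀ i, b i = -1 ∨ b i = 0 ∨ b i = 1) →
          (∀ b ∈ B, (Finset.univ.filter (fun i => b i ≠ 0)).card = d) →
          (∀ a ∈ A, ∀ a' ∈ A, ∀ b ∈ B, ∀ b' ∈ B, a + b = a' + b' → a = a' ∧ b = b') →
          (A.card * B.card : ℝ) ≤ C * n ^ c * 2 ^ n * n.choose ((d + 1) / 2) := by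
  refine ⟨2, 1, two_pos, fun n d hd hdn A B hA hB hBd huniq => ?_⟩
  have hinj : Set.InjOn (fun p : (Fin n → ℤ) × (Fin n → ℤ) => p.1 + p.2) ↑(A ×ˢ B) :=
    fun p hp q hq h => by
      simp only [coe_product, Set.mem_prod, mem_coe] at hp hq
      exact Prod.ext_iff.2 (huniq _ hp.1 _ hq.1 _ hp.2 _ hq.2 h)
  have hr : ∀ p ∈ A ×ˢ B, #(extremeCoords (p.1 + p.2)) ∈ range (d + 1) := fun p hp => by
    rw [mem_product] at hp
    have := card_extremeCoords_add_add_card_extremeCoords_one_sub_add (hA _ hp.1) (hB _ hp.2)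
    rw [hBd _ hp.2] at this
    rw [mem_range]; omega
  have key : #A * #B ≤ (d + 1) * (n.choose ((d + 1) / 2) * 2 ^ n) := by
    rw [← card_product, card_eq_sum_card_fiberwise hr]
    calc _ ≤ ∑ _r ∈ range (d + 1), n.choose ((d + 1) / 2) * 2 ^ n :=
          sum_le_sum fun r hr' => by
            simpa using card_filter_card_extremeCoords_add_eq_le hA hB hBd (by simpa using hdn)
              hinj (Nat.lt_succ_iff.1 (mem_range.1 hr'))
      _ = _ := by rw [sum_const, card_range, smul_eq_mul]
  have : #A * #B ≤ 2 * n ^ 1 * 2 ^ n * n.choose ((d + 1) / 2) :=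
    key.trans (by rw [pow_one, mul_comm (n.choose _), ← mul_assoc]; gcongr; omega)
  exact_mod_cast this
end

section
/- Let n and d be even positive integers with d ≤ n. Let A ⊆ {0,1}^n and B ⊆ {-1,0,1}^n be sets of vectors such that (i) every b ∈ B has exactly d nonzero entries, and (ii) for all a, a' ∈ A and b, b' ∈ B, if a + b = a' + b' (addition in ℤ^n) then a = a' and b = b'. Then |A| · |B| ≤ (n+1)^6 · 2^n · binomial(n, d/2). -/
/-!
Write `k = d / 2`. For `a ∈ {0,1}ⁿ` and `b ∈ {-1,0,1}ⁿ`, both `a + b` and `a - b` lie in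
`{-1,0,1,2}ⁿ`, and each nonzero coordinate of `b` puts exactly one of them outside `{0,1}` there;
so one of `a + b`, `a - b` has at most `k` coordinates outside `{0,1}`. Unique decodability makes
both `(a, b) ↦ a + b` and `(a, b) ↦ a - b` injective on `A × B` (as `a - b = a' - b'` means
`a + b' = a' + b`), so `|A| |B|` is at most twice the number of vectors in `{-1,0,1,2}ⁿ` with at
most `k` coordinates outside `{0,1}`, at most `2ⁿ ∑_{j ≤ k} C(n, j) ≤ 2ⁿ (k + 1) C(n, k)`.
-/

open Finset

namespace Nat

theorem choose_le_choose_of_le_half_left {n j k : ℕ} (hjk : j ≤ k) (hk : k ≤ n / 2) :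
    n.choose j ≤ n.choose k := by
  induction k, hjk using Nat.le_induction with
  | base => rfl
  | succ k _ ih => exact (ih (by omega)).trans (choose_le_succ_of_lt_half_left (by omega))

theorem sum_range_choose_le_mul_choose {n k : ℕ} (hk : k ≤ n / 2) :
    ∑ j ∈ range (k + 1), n.choose j ≤ (k + 1) * n.choose k := by
  simpa using sum_le_card_nsmul (range (k + 1)) (n.choose ·) (n.choose k) fun j hj =>
    choose_le_choose_of_le_half_left (Nat.lt_succ_iff.mp (mem_range.mp hj)) hk

end Nat

section NonBinary

variable {ι : Type*} [Fintype ι] [DecidableEq ι]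

def nonBinaryCoords (v : ι → ℤ) : Finset ι :=
  univ.filter fun i => v i ≠ 0 ∧ v i ≠ 1

variable (ι) in
noncomputable def nearlyBinaryVectors (k : ℕ) : Finset (ι → ℤ) :=
  (Fintype.piFinset fun _ => Icc (-1) 2).filter fun v => (nonBinaryCoords v).card ≤ k

theorem card_nearlyBinaryVectors_le (k : ℕ) :
    (nearlyBinaryVectors ι k).card ≤
      2 ^ Fintype.card ι * ∑ j ∈ range (k + 1), (Fintype.card ι).choose j := by
  set T : Finset (Finset ι) := (range (k + 1)).biUnion fun j => powersetCard j univ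
  have hT : T.card ≤ ∑ j ∈ range (k + 1), (Fintype.card ι).choose j := by
    refine card_biUnion_le.trans_eq (sum_congr rfl fun j _ => ?_)
    rw [card_powersetCard, card_univ]
  -- `v i` is recovered from whether it is positive and whether `i` is a non-binary coordinate.
  let encode : (ι → ℤ) → (ι → Bool) × Finset ι :=
    fun v => (fun i => decide (0 < v i), nonBinaryCoords v)
  have hmaps : Set.MapsTo encode (nearlyBinaryVectors ι k)
      (univ ×ˢ T : Finset ((ι → Bool) × Finset ι)) := fun v hv => by
    rw [mem_coe, nearlyBinaryVectors, mem_filter] at hv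
    rw [mem_coe, mem_product, mem_biUnion]
    exact ⟨mem_univ _, _, mem_range.mpr (Nat.lt_succ_of_le hv.2),
      mem_powersetCard.mpr ⟨subset_univ _, rfl⟩⟩
  have hinj : Set.InjOn encode (nearlyBinaryVectors ι k) := by
    intro v hv w hw hvw
    simp only [nearlyBinaryVectors, coe_filter, Fintype.mem_piFinset, mem_Icc] at hv hw
    simp only [encode, Prod.mk.injEq, funext_iff, decide_eq_decide, Finset.ext_iff,
      nonBinaryCoords, mem_filter, mem_univ, true_and] at hvw
    funext i
    have := hv.1 i; have := hw.1 i; have := hvw.1 i; have := hvw.2 i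
    omega
  calc (nearlyBinaryVectors ι k).card ≤ (univ ×ˢ T).card :=
      card_le_card_of_injOn encode hmaps hinj
    _ ≤ 2 ^ Fintype.card ι * ∑ j ∈ range (k + 1), (Fintype.card ι).choose j := by
      rw [card_product, card_univ, Fintype.card_fun, Fintype.card_bool]
      exact Nat.mul_le_mul_left _ hT

theorem card_filter_nonBinaryCoords_le {α : Type*} {P : Finset α} (k : ℕ) {f : α → ι → ℤ}
    (hf : Set.InjOn f P) (hrange : ∀ p ∈ P, ∀ i, -1 ≤ f p i ∧ f p i ≤ 2) :
    (P.filter fun p => (nonBinaryCoords (f p)).card ≤ k).card ≤ (nearlyBinaryVectors ι k).card := by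
  refine card_le_card_of_injOn f (fun p hp => ?_) (hf.mono (coe_subset.mpr (filter_subset _ _)))
  rw [mem_coe, mem_filter] at hp
  rw [mem_coe, nearlyBinaryVectors, mem_filter, Fintype.mem_piFinset]
  exact ⟨fun i => mem_Icc.mpr (hrange p hp.1 i), hp.2⟩

theorem card_nonBinaryCoords_add_add_sub {a b : ι → ℤ} (ha : ∀ i, a i = 0 ∨ a i = 1)
    (hb : ∀ i, b i = -1 ∨ b i = 0 ∨ b i = 1) :
    (nonBinaryCoords (a + b)).card + (nonBinaryCoords (a - b)).card =
      (univ.filter fun i => b i ≠ 0).card := by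
  rw [← card_union_of_disjoint]
  · congr 1
    ext i
    simp only [nonBinaryCoords, mem_union, mem_filter, mem_univ, true_and, Pi.add_apply,
      Pi.sub_apply]
    have := ha i; have := hb i
    omega
  · refine disjoint_left.mpr fun i hadd hsub => ?_
    simp only [nonBinaryCoords, mem_filter, mem_univ, true_and, Pi.add_apply,
      Pi.sub_apply] at hadd hsub
    have := ha i; have := hb i
    omega

end NonBinary

section UniquelyDecodable

variable {G : Type*} [AddCommGroup G] {A B : Finset G}

theorem injOn_add_of_uniquelyDecodable
    (hUD : ∀ a ∈ A, ∀ a' ∈ A, ∀ b ∈ B, ∀ b' ∈ B, a + b = a' + b' → a = a' ∧ b = b') :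
    Set.InjOn (fun p : G × G => p.1 + p.2) (A ×ˢ B : Finset (G × G)) := by
  rintro ⟨a, b⟩ hp ⟨a', b'⟩ hq h
  rw [mem_coe, mem_product] at hp hq
  obtain ⟨rfl, rfl⟩ := hUD a hp.1 a' hq.1 b hp.2 b' hq.2 h
  rfl

theorem injOn_sub_of_uniquelyDecodable
    (hUD : ∀ a ∈ A, ∀ a' ∈ A, ∀ b ∈ B, ∀ b' ∈ B, a + b = a' + b' → a = a' ∧ b = b') :
    Set.InjOn (fun p : G × G => p.1 - p.2) (A ×ˢ B : Finset (G × G)) := by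
  rintro ⟨a, b⟩ hp ⟨a', b'⟩ hq h
  rw [mem_coe, mem_product] at hp hq
  obtain ⟨rfl, rfl⟩ := hUD a hp.1 a' hq.1 b' hq.2 b hp.2 (sub_eq_sub_iff_add_eq_add.mp h)
  rfl

end UniquelyDecodable

theorem card_mul_card_le_two_mul_card_nearlyBinaryVectors {ι : Type*} [Fintype ι]
    [DecidableEq ι] {d : ℕ} {A B : Finset (ι → ℤ)}
    (hA : ∀ a ∈ A, ∀ i, a i = 0 ∨ a i = 1)
    (hB : ∀ b ∈ B, ∀ i, b i = -1 ∨ b i = 0 ∨ b i = 1)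
    (hBsupp : ∀ b ∈ B, (univ.filter fun i => b i ≠ 0).card = d)
    (hUD : ∀ a ∈ A, ∀ a' ∈ A, ∀ b ∈ B, ∀ b' ∈ B, a + b = a' + b' → a = a' ∧ b = b') :
    A.card * B.card ≤ 2 * (nearlyBinaryVectors ι (d / 2)).card := by
  have hentries : ∀ p ∈ A ×ˢ B, ∀ i, (-1 ≤ p.1 i + p.2 i ∧ p.1 i + p.2 i ≤ 2) ∧
      (-1 ≤ p.1 i - p.2 i ∧ p.1 i - p.2 i ≤ 2) := fun p hp i => by
    rw [mem_product] at hp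
    have := hA _ hp.1 i; have := hB _ hp.2 i
    omega
  have hcover : A ×ˢ B ⊆
      (A ×ˢ B).filter (fun p => (nonBinaryCoords (p.1 + p.2)).card ≤ d / 2) ∪
        (A ×ˢ B).filter (fun p => (nonBinaryCoords (p.1 - p.2)).card ≤ d / 2) := fun p hp => by
    rw [mem_product] at hp
    have hsplit := card_nonBinaryCoords_add_add_sub (hA _ hp.1) (hB _ hp.2)
    rw [hBsupp _ hp.2] at hsplit
    simp only [mem_union, mem_filter, mem_product, hp, true_and]
    omega
  have hadd := card_filter_nonBinaryCoords_le (d / 2) (injOn_add_of_uniquelyDecodable hUD)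
    fun p hp i => (hentries p hp i).1
  have hsub := card_filter_nonBinaryCoords_le (d / 2) (injOn_sub_of_uniquelyDecodable hUD)
    fun p hp i => (hentries p hp i).2
  calc A.card * B.card = (A ×ˢ B).card := (card_product A B).symm
    _ ≤ _ := card_le_card hcover
    _ ≤ _ := card_union_le _ _
    _ ≤ 2 * (nearlyBinaryVectors ι (d / 2)).card := by omega

theorem stmt1_general (n d : ℕ) (hn : 0 < n)
    (hdn : d ≤ n) (A B : Finset (Fin n → ℤ))
    (hA : ∀ a ∈ A, ∀ i, a i = 0 ∨ a i = 1)
    (hB : ∀ b ∈ B, ∀ i, b i = -1 ∨ b i = 0 ∨ b i = 1)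
    (hBsupp : ∀ b ∈ B, (Finset.univ.filter (fun i => b i ≠ 0)).card = d)
    (hUDCP : ∀ a ∈ A, ∀ a' ∈ A, ∀ b ∈ B, ∀ b' ∈ B, a + b = a' + b' → a = a' ∧ b = b') :
    A.card * B.card ≤ (n + 1) ^ 6 * 2 ^ n * n.choose (d / 2) := by
  set k := d / 2 with hk
  have hV := card_nearlyBinaryVectors_le (ι := Fin n) k
  rw [Fintype.card_fin] at hV
  have hsum := Nat.sum_range_choose_le_mul_choose (Nat.div_le_div_right (c := 2) hdn)
  have hpoly : 2 * (k + 1) ≤ (n + 1) ^ 6 :=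
    calc 2 * (k + 1) ≤ (n + 1) ^ 2 := by nlinarith [Nat.div_mul_le_self d 2]
      _ ≤ (n + 1) ^ 6 := Nat.pow_le_pow_right (by omega) (by omega)
  calc A.card * B.card ≤ 2 * (nearlyBinaryVectors (Fin n) k).card :=
        card_mul_card_le_two_mul_card_nearlyBinaryVectors hA hB hBsupp hUDCP
    _ ≤ 2 * (2 ^ n * ((k + 1) * n.choose k)) :=
      Nat.mul_le_mul_left 2 (hV.trans (Nat.mul_le_mul_left _ hsum))
    _ = 2 * (k + 1) * (2 ^ n * n.choose k) := by ring
    _ ≤ (n + 1) ^ 6 * (2 ^ n * n.choose k) := Nat.mul_le_mul_right _ hpoly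
    _ = (n + 1) ^ 6 * 2 ^ n * n.choose k := (mul_assoc _ _ _).symm

/-- UDCP-style bound, even case, explicit polynomial factor. -/
theorem stmt1 (n d : ℕ) (hn : 0 < n) (hneven : Even n) (hd : 0 < d) (hdeven : Even d)
    (hdn : d ≤ n) (A B : Finset (Fin n → ℤ))
    (hA : ∀ a ∈ A, ∀ i, a i = 0 ∨ a i = 1)
    (hB : ∀ b ∈ B, ∀ i, b i = -1 ∨ b i = 0 ∨ b i = 1)
    (hBsupp : ∀ b ∈ B, (Finset.univ.filter (fun i => b i ≠ 0)).card = d)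
    (hUDCP : ∀ a ∈ A, ∀ a' ∈ A, ∀ b ∈ B, ∀ b' ∈ B, a + b = a' + b' → a = a' ∧ b = b') :
    A.card * B.card ≤ (n + 1) ^ 6 * 2 ^ n * n.choose (d / 2) :=
  stmt1_general n d hn hdn A B hA hB hBsupp hUDCP
end

section
/- Let m be a positive integer and w ∈ ℤ^m. Then the number of pairs (x,y) ∈ {0,1}^m × {0,1}^m with ⟨w,x⟩ = ⟨w,y⟩ equals Σ_{d=0}^{m} |{v ∈ {-1,0,1}^m : ⟨w,v⟩ = 0 and |supp(v)| = d}| · 2^{m−d}. -/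
/-!
Sending `(x, y)` to `x - y` maps the pairs with `⟨w, x⟩ = ⟨w, y⟩` onto the vectors
`v ∈ {-1, 0, 1}^m` with `⟨w, v⟩ = 0`. Over `v`, the coordinates `i ∈ supp v` of `x` and `y` are
forced, while for `v i = 0` one may still choose `x i = y i ∈ {0, 1}`, so the fibre has
`2^(m - |supp v|)` elements. Grouping the `v` by support size gives the formula.
-/

open Finset

def boolSub {ι : Type*} (x y : ι → Bool) (i : ι) : ℤ := (x i).toInt - (y i).toInt

def ternaryOrthogonal {ι : Type*} [Fintype ι] [DecidableEq ι] (w : ι → ℤ) : Finset (ι → ℤ) :=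
  {v ∈ Fintype.piFinset fun _ => ({-1, 0, 1} : Finset ℤ) | ∑ i, w i * v i = 0}

section

variable {ι : Type*} [Fintype ι]

lemma mem_ternaryOrthogonal [DecidableEq ι] {w v : ι → ℤ} :
    v ∈ ternaryOrthogonal w ↔ (∀ i, v i = -1 ∨ v i = 0 ∨ v i = 1) ∧ ∑ i, w i * v i = 0 := by
  simp [ternaryOrthogonal, Fintype.mem_piFinset]

omit [Fintype ι] in
lemma boolSub_eq_neg_one_or_zero_or_one (x y : ι → Bool) (i : ι) :
    boolSub x y i = -1 ∨ boolSub x y i = 0 ∨ boolSub x y i = 1 := by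
  unfold boolSub; cases x i <;> cases y i <;> simp

lemma sum_ite_sub_sum_ite_eq_sum_mul_boolSub (w : ι → ℤ) (x y : ι → Bool) :
    ∑ i, (if x i then w i else 0) - ∑ i, (if y i then w i else 0) = ∑ i, w i * boolSub x y i := by
  rw [← sum_sub_distrib]
  refine sum_congr rfl fun i _ => ?_
  unfold boolSub; cases x i <;> cases y i <;> simp

lemma card_toInt_sub_toInt_eq {a : ℤ} (ha : a = -1 ∨ a = 0 ∨ a = 1) :
    #{q : Bool × Bool | q.1.toInt - q.2.toInt = a} = if a = 0 then 2 else 1 := by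
  rcases ha with rfl | rfl | rfl <;> decide

lemma card_boolSub_eq [DecidableEq ι] {v : ι → ℤ} (hv : ∀ i, v i = -1 ∨ v i = 0 ∨ v i = 1) :
    #{p : (ι → Bool) × (ι → Bool) | boolSub p.1 p.2 = v} = 2 ^ (Fintype.card ι - #{i | v i ≠ 0}) := by
  calc #{p : (ι → Bool) × (ι → Bool) | boolSub p.1 p.2 = v}
      = #(Fintype.piFinset fun i => {q : Bool × Bool | q.1.toInt - q.2.toInt = v i}) := by
        refine card_equiv (Equiv.arrowProdEquivProdArrow ι _ _).symm fun p => ?_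
        simp [Fintype.mem_piFinset, funext_iff, boolSub, Equiv.arrowProdEquivProdArrow]
    _ = ∏ i, if v i = 0 then 2 else 1 := by
        rw [Fintype.card_piFinset]
        exact prod_congr rfl fun i _ => card_toInt_sub_toInt_eq (hv i)
    _ = 2 ^ (Fintype.card ι - #{i | v i ≠ 0}) := by
        rw [prod_ite, prod_const, prod_const_one, mul_one, ← card_univ,
          ← card_filter_add_card_filter_not (s := univ) (fun i => v i = 0), Nat.add_sub_cancel]

lemma card_filter_sum_ite_eq_sum_ite [DecidableEq ι] (w : ι → ℤ) :
    #{p : (ι → Bool) × (ι → Bool) |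
        ∑ i, (if p.1 i then w i else 0) = ∑ i, (if p.2 i then w i else 0)}
      = ∑ v ∈ ternaryOrthogonal w, 2 ^ (Fintype.card ι - #{i | v i ≠ 0}) := by
  have h_orth (p : (ι → Bool) × (ι → Bool)) :
      (∑ i, (if p.1 i then w i else 0) = ∑ i, (if p.2 i then w i else 0)) ↔
        ∑ i, w i * boolSub p.1 p.2 i = 0 := by
    rw [← sum_ite_sub_sum_ite_eq_sum_mul_boolSub, sub_eq_zero]
  rw [card_eq_sum_card_fiberwise (f := fun p => boolSub p.1 p.2) (t := ternaryOrthogonal w)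
    fun p hp => mem_ternaryOrthogonal.2
      ⟨boolSub_eq_neg_one_or_zero_or_one p.1 p.2, (h_orth p).1 (mem_filter.1 hp).2⟩]
  refine sum_congr rfl fun v hv => ?_
  obtain ⟨hv_ternary, hv_orth⟩ := mem_ternaryOrthogonal.1 hv
  rw [← card_boolSub_eq hv_ternary, filter_filter]
  congr 1
  exact filter_congr fun p _ => ⟨And.right, fun hp => ⟨(h_orth p).2 (hp ▸ hv_orth), hp⟩⟩

end

lemma sum_comp_eq_sum_range_card_filter_mul {α : Type*} (s : Finset α) (c : α → ℕ) {n : ℕ}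
    (hc : ∀ a ∈ s, c a ≤ n) (g : ℕ → ℕ) :
    ∑ a ∈ s, g (c a) = ∑ d ∈ range (n + 1), #{a ∈ s | c a = d} * g d := by
  rw [← sum_fiberwise_of_maps_to fun a ha => mem_range_succ_iff.2 (hc a ha)]
  refine sum_congr rfl fun d _ => ?_
  rw [← smul_eq_mul, ← sum_const]
  exact sum_congr rfl fun a ha => by rw [(mem_filter.1 ha).2]

theorem stmt7_general (m : ℕ) (w : Fin m → ℤ) :
    (((Finset.univ : Finset ((Fin m → Bool) × (Fin m → Bool))).filter
      (fun p => ∑ i, (if p.1 i then w i else 0) = ∑ i, (if p.2 i then w i else 0))).card)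
    = ∑ d ∈ Finset.range (m + 1),
        {v : Fin m → ℤ | (∀ i, v i = -1 ∨ v i = 0 ∨ v i = 1) ∧ (∑ i, w i * v i = 0) ∧
          (Finset.univ.filter (fun i => v i ≠ 0)).card = d}.ncard * 2 ^ (m - d) := by
  have h_ncard (d : ℕ) :
      {v : Fin m → ℤ | (∀ i, v i = -1 ∨ v i = 0 ∨ v i = 1) ∧ (∑ i, w i * v i = 0) ∧
          #{i | v i ≠ 0} = d}.ncard = #{v ∈ ternaryOrthogonal w | #{i | v i ≠ 0} = d} := by
    rw [← Set.ncard_coe_finset]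
    congr 1
    ext v
    simp only [coe_filter, mem_ternaryOrthogonal, Set.mem_ofPred_eq, and_assoc]
  simp_rw [h_ncard]
  rw [card_filter_sum_ite_eq_sum_ite, Fintype.card_fin]
  exact sum_comp_eq_sum_range_card_filter_mul _ (fun v : Fin m → ℤ => #{i | v i ≠ 0})
    (fun v _ => (card_filter_le _ _).trans_eq (card_fin m)) (fun d => 2 ^ (m - d))

/-- the number of pairs of 0/1-vectors with equal weighted sums
equals the sum over d of the number of {-1,0,1}-vectors with inner product 0
and support size d, times 2^(m-d). -/
theorem stmt7 (m : ℕ) (hm : 0 < m) (w : Fin m → ℤ) :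
    (((Finset.univ : Finset ((Fin m → Bool) × (Fin m → Bool))).filter
      (fun p => ∑ i, (if p.1 i then w i else 0) = ∑ i, (if p.2 i then w i else 0))).card)
    = ∑ d ∈ Finset.range (m + 1),
        {v : Fin m → ℤ | (∀ i, v i = -1 ∨ v i = 0 ∨ v i = 1) ∧ (∑ i, w i * v i = 0) ∧
          (Finset.univ.filter (fun i => v i ≠ 0)).card = d}.ncard * 2 ^ (m - d) :=
  stmt7_general m w
end

section
/- Let n be an even positive integer and w ∈ ℤ^n. For 0 ≤ d ≤ n, let C_d = {x ∈ {-1,0,1}^n : ⟨w,x⟩ = 0 and |supp(x)| = d}. Let L be a uniformly random subset of [n] of size n/2, and let P^L = {(x,y) : x,y : L → {0,1}, Σ_{i∈L} w_i x_i = Σ_{i∈L} w_i y_i}. Then E[|P^L|] ≤ Σ_{d=0}^{n/2} |C_d| · (binomial(n−d, n/2−d) / binomial(n, n/2)) · 2^{n/2−d}. -/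
/-!
For a pair `(A, B)` of subsets of `L` put `x = 1_A - 1_B`. Then `x` is a `{-1, 0, 1}`-vector
supported in `L`, the pair has equal `w`-sums iff `⟨w, x⟩ = 0`, and `(A, B)` is recovered
from `x` together with `A ∩ B`, which is an arbitrary subset of `L \ supp x`. Hence
`|P^L| = ∑_{x ∈ C, supp x ⊆ L} 2 ^ (|L| - |supp x|)`. Summing over `L`, a vector with
`|supp x| = d ≤ n/2` is supported in exactly `binomial(n - d, n/2 - d)` of the sets `L`, so the
bound holds with equality.
-/

open Finset

variable {α : Type*} [Fintype α]

def supp (x : α → ℤ) : Finset α := univ.filter (fun i => x i ≠ 0)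

theorem mem_supp {x : α → ℤ} {i : α} : i ∈ supp x ↔ x i ≠ 0 := by simp [supp]

variable [DecidableEq α]

def signedIndicator (A B : Finset α) (i : α) : ℤ :=
  (if i ∈ A then 1 else 0) - (if i ∈ B then 1 else 0)

variable (α) in
def ternaryVectors : Finset (α → ℤ) :=
  Fintype.piFinset fun _ => {-1, 0, 1}

theorem mem_ternaryVectors {x : α → ℤ} :
    x ∈ ternaryVectors α ↔ ∀ i, x i = -1 ∨ x i = 0 ∨ x i = 1 := by
  simp [ternaryVectors]

def zeroSumTernary (w : α → ℤ) : Finset (α → ℤ) :=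
  {x ∈ ternaryVectors α | ∑ i, w i * x i = 0}

def equalSumPairs (w : α → ℤ) (L : Finset α) : Finset (Finset α × Finset α) :=
  {p ∈ L.powerset ×ˢ L.powerset | ∑ i ∈ p.1, w i = ∑ i ∈ p.2, w i}

theorem sum_mul_signedIndicator (w : α → ℤ) (A B : Finset α) :
    ∑ i, w i * signedIndicator A B i = ∑ i ∈ A, w i - ∑ i ∈ B, w i := by
  simp only [signedIndicator, mul_sub, sum_sub_distrib, mul_ite, mul_one, mul_zero,
    sum_ite_mem, univ_inter]

theorem signedIndicator_mem_ternaryVectors (A B : Finset α) :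
    signedIndicator A B ∈ ternaryVectors α := by
  rw [mem_ternaryVectors]
  intro i
  unfold signedIndicator
  split_ifs <;> simp

theorem supp_signedIndicator_subset (A B : Finset α) : supp (signedIndicator A B) ⊆ A ∪ B := by
  intro i
  rw [mem_supp, mem_union, signedIndicator]
  split_ifs <;> simp_all

theorem card_signedIndicator_fiber {x : α → ℤ} (hx : x ∈ ternaryVectors α) {L : Finset α}
    (hL : supp x ⊆ L) :
    #{p ∈ L.powerset ×ˢ L.powerset | signedIndicator p.1 p.2 = x} = 2 ^ (#L - #(supp x)) := by
  rw [mem_ternaryVectors] at hx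
  have hxL : ∀ i, x i ≠ 0 → i ∈ L := fun i hi => hL (mem_supp.2 hi)
  rw [← card_sdiff_of_subset hL, ← card_powerset]
  refine card_nbij' (fun p => p.1 ∩ p.2)
    (fun S => (({i | x i = 1} : Finset α) ∪ S, ({i | x i = -1} : Finset α) ∪ S)) ?_ ?_ ?_ ?_
  · rintro ⟨A, B⟩ h
    simp only [mem_coe, mem_filter, mem_product, mem_powerset] at h
    obtain ⟨⟨hA, hB⟩, rfl⟩ := h
    simp only [mem_coe, mem_powerset, subset_iff, mem_inter, mem_sdiff, mem_supp, signedIndicator]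
    grind
  · intro S hS
    simp only [mem_coe, mem_powerset, subset_iff, mem_sdiff, mem_supp] at hS
    simp only [mem_coe, mem_filter, mem_product, mem_powerset, subset_iff, mem_union,
      signedIndicator, funext_iff]
    grind
  · rintro ⟨A, B⟩ h
    simp only [mem_coe, mem_filter, mem_product, mem_powerset] at h
    obtain ⟨⟨hA, hB⟩, rfl⟩ := h
    simp only [Prod.ext_iff, Finset.ext_iff, mem_union, mem_inter, signedIndicator]
    grind
  · intro S hS
    simp only [mem_coe, mem_powerset, subset_iff, mem_sdiff, mem_supp] at hS
    simp only [Finset.ext_iff, mem_union, mem_filter, mem_inter]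
    grind

theorem card_equalSumPairs (w : α → ℤ) (L : Finset α) :
    #(equalSumPairs w L) = ∑ x ∈ zeroSumTernary w with supp x ⊆ L, 2 ^ (#L - #(supp x)) := by
  rw [card_eq_sum_card_fiberwise (f := fun p => signedIndicator p.1 p.2)]
  · refine sum_congr rfl fun x hx => ?_
    simp only [zeroSumTernary, mem_filter] at hx
    obtain ⟨⟨hx, hw⟩, hL⟩ := hx
    rw [equalSumPairs, filter_filter, ← card_signedIndicator_fiber hx hL]
    congr 1
    refine filter_congr fun p _ => and_iff_right_of_imp fun h => ?_
    rwa [← sub_eq_zero, ← sum_mul_signedIndicator, h]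
  · rintro ⟨A, B⟩ hp
    simp only [equalSumPairs, coe_filter, mem_product, mem_powerset, Set.mem_ofPred_eq] at hp
    obtain ⟨⟨hA, hB⟩, hsum⟩ := hp
    simp only [zeroSumTernary, coe_filter, mem_filter, Set.mem_ofPred_eq,
      signedIndicator_mem_ternaryVectors, sum_mul_signedIndicator, hsum, sub_self, true_and]
    exact (supp_signedIndicator_subset A B).trans (union_subset hA hB)

theorem sum_card_equalSumPairs (w : α → ℤ) (k : ℕ) :
    ∑ L ∈ univ.powersetCard k, #(equalSumPairs w L) =
      ∑ d ∈ range (k + 1), #{x ∈ zeroSumTernary w | #(supp x) = d} *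
        (Fintype.card α - d).choose (k - d) * 2 ^ (k - d) := by
  calc ∑ L ∈ univ.powersetCard k, #(equalSumPairs w L)
      = ∑ L ∈ univ.powersetCard k, ∑ x ∈ zeroSumTernary w with supp x ⊆ L,
          2 ^ (k - #(supp x)) := by
        refine sum_congr rfl fun L hL => ?_
        rw [card_equalSumPairs, (mem_powersetCard.1 hL).2]
    _ = ∑ x ∈ zeroSumTernary w,
          #{L ∈ univ.powersetCard k | supp x ⊆ L} * 2 ^ (k - #(supp x)) := by
        simp only [sum_filter, card_filter, sum_mul, ite_mul, one_mul, zero_mul]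
        exact sum_comm
    _ = ∑ x ∈ zeroSumTernary w with #(supp x) ∈ range (k + 1),
          #{L ∈ univ.powersetCard k | supp x ⊆ L} * 2 ^ (k - #(supp x)) := by
        refine (sum_filter_of_ne fun x _ hx => ?_).symm
        obtain ⟨L, hL⟩ := card_ne_zero.1 (left_ne_zero_of_mul hx)
        rw [mem_filter, mem_powersetCard] at hL
        exact mem_range.2 (Nat.lt_succ_of_le (hL.1.2 ▸ card_le_card hL.2))
    _ = _ := by
        rw [← sum_fiberwise_eq_sum_filter]
        refine sum_congr rfl fun d hd => ?_
        rw [card_eq_sum_ones, sum_mul, sum_mul]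
        refine sum_congr rfl fun x hx => ?_
        obtain ⟨-, rfl⟩ := mem_filter.1 hx
        rw [one_mul, card_filter_powersetCard_subset _ _ _ (subset_univ _)
          (Nat.lt_succ_iff.1 (mem_range.1 hd)), card_univ]

theorem ncard_setOf_eq_card_zeroSumTernary (w : α → ℤ) (d : ℕ) :
    {x : α → ℤ | (∀ i, x i = -1 ∨ x i = 0 ∨ x i = 1) ∧ (∑ i, w i * x i = 0) ∧
      (univ.filter (fun i => x i ≠ 0)).card = d}.ncard =
      #{x ∈ zeroSumTernary w | #(supp x) = d} := by
  rw [← Set.ncard_coe_finset]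
  congr 1
  ext x
  simp [zeroSumTernary, mem_ternaryVectors, supp, and_assoc]

theorem stmt10_general (n : ℕ) (w : Fin n → ℤ) :
    (∑ L ∈ (Finset.univ : Finset (Fin n)).powersetCard (n / 2),
        (((L.powerset ×ˢ L.powerset).filter
          (fun p => ∑ i ∈ p.1, w i = ∑ i ∈ p.2, w i)).card : ℝ)) /
      (((Finset.univ : Finset (Fin n)).powersetCard (n / 2)).card : ℝ)
    ≤ ∑ d ∈ Finset.range (n / 2 + 1),
        ({x : Fin n → ℤ | (∀ i, x i = -1 ∨ x i = 0 ∨ x i = 1) ∧ (∑ i, w i * x i = 0) ∧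
            (Finset.univ.filter (fun i => x i ≠ 0)).card = d}.ncard : ℝ) *
          (((n - d).choose (n / 2 - d) : ℝ) / (n.choose (n / 2) : ℝ)) * 2 ^ (n / 2 - d) := by
  have hcount := sum_card_equalSumPairs w (n / 2)
  rw [Fintype.card_fin] at hcount
  simp only [equalSumPairs] at hcount
  apply le_of_eq
  rw [card_powersetCard, card_univ, Fintype.card_fin, ← Nat.cast_sum, hcount]
  push_cast
  rw [sum_div]
  refine sum_congr rfl fun d _ => ?_
  rw [ncard_setOf_eq_card_zeroSumTernary]
  ring

/-- expected number of equal-sum pairs on a random half of [n]. -/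
theorem stmt10 (n : ℕ) (hn : 0 < n) (hneven : Even n) (w : Fin n → ℤ) :
    (∑ L ∈ (Finset.univ : Finset (Fin n)).powersetCard (n / 2),
        (((L.powerset ×ˢ L.powerset).filter
          (fun p => ∑ i ∈ p.1, w i = ∑ i ∈ p.2, w i)).card : ℝ)) /
      (((Finset.univ : Finset (Fin n)).powersetCard (n / 2)).card : ℝ)
    ≤ ∑ d ∈ Finset.range (n / 2 + 1),
        ({x : Fin n → ℤ | (∀ i, x i = -1 ∨ x i = 0 ∨ x i = 1) ∧ (∑ i, w i * x i = 0) ∧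
            (Finset.univ.filter (fun i => x i ≠ 0)).card = d}.ncard : ℝ) *
          (((n - d).choose (n / 2 - d) : ℝ) / (n.choose (n / 2) : ℝ)) * 2 ^ (n / 2 - d) :=
  stmt10_general n w
end
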